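/- arXiv:math/0109013 — 2 statements merged into one kernel-verified Lean document; each statement's English description precedes it below -/
import Mathlib

section
/- The symplectic (antisymmetric) generalized Pascal matrices P_{α,−α}(2n) associated to the sequence α = (0,1,1,1,1,…) have determinant 1 for every natural integer n. -/
/-- Entries of the generalized Pascal triangle with first column `α`, first row `β`
and the Pascal recursion rule in the interior. -/
def pascalRec {R : Type*} [CommRing R] (α β : ℕ → R) : ℕ → ℕ → R
  | i, 0 => α i
  | 0, j + 1 => β (j + 1)
  | i + 1, j + 1 => pascalRec α β i (j + 1) + pascalRec α β (i + 1) j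

/-!
Let `a i` be the sequence `k ↦ (i - 1).choose k` (binomial coefficients of a possibly negative
integer), `A` the matrix with rows `a i`, `T` the right shift of sequences, and
`ω(u, v) = ∑_{l < m-1} (u (l+1) v l - u l v (l+1))` the skew form of the tridiagonal matrix `S`
with `1` below and `-1` above the diagonal. The Pascal rule says `a (i+1) = a i + T (a i)`, and
`ω(T u, T v) = ω(u, v)` on these rows, so the entries `ω(a i, a j)` of `A S Aᵀ` obey the Pascal
recursion; their border is that of `P`, hence `P = A S Aᵀ`. Multiplying `A` by an upper
unitriangular matrix gives the lower unitriangular Pascal matrix, so `det A = 1`, and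
`S = L J Lᵀ` with `L` unitriangular and `J` block diagonal with blocks `!![0, -1; 1, 0]`, so
`det S = 1` in even size.
-/

open Finset Matrix

section Corner

variable {R : Type*}

def corner (m : ℕ) (f : ℕ → ℕ → R) : Matrix (Fin m) (Fin m) R := of fun i j => f i j

theorem corner_mul [NonUnitalNonAssocSemiring R] (m : ℕ) (f g : ℕ → ℕ → R) :
    corner m f * corner m g = corner m fun i j => ∑ k ∈ range m, f i k * g k j := by
  ext i j
  exact Fin.sum_univ_eq_sum_range (fun k => f i k * g k j) m

theorem corner_transpose (m : ℕ) (f : ℕ → ℕ → R) :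
    (corner m f)ᵀ = corner m fun i j => f j i :=
  rfl

theorem corner_congr {m : ℕ} {f g : ℕ → ℕ → R} (h : ∀ i j, i < m → j < m → f i j = g i j) :
    corner m f = corner m g := by
  ext i j
  exact h i j i.2 j.2

theorem det_corner_of_unitriangular [CommRing R] {m : ℕ} {f : ℕ → ℕ → R}
    (hlt : ∀ i j, i < j → f i j = 0) (hdiag : ∀ i, f i i = 1) : (corner m f).det = 1 := by
  rw [det_of_isLowerTriangular (corner m f) fun i j (hij : i < j) => hlt i j hij]
  exact prod_eq_one fun i _ => hdiag i

end Corner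

theorem eq_pascalRec {R : Type*} [CommRing R] {α β : ℕ → R} {m : ℕ} {f : ℕ → ℕ → R}
    (hcol : ∀ i < m, f i 0 = α i) (hrow : ∀ j, j + 1 < m → f 0 (j + 1) = β (j + 1))
    (hrec : ∀ i j, i + 1 < m → j + 1 < m → f (i + 1) (j + 1) = f i (j + 1) + f (i + 1) j)
    (i j : ℕ) (hi : i < m) (hj : j < m) : f i j = pascalRec α β i j := by
  fun_induction pascalRec α β i j with
  | case1 i => exact hcol i hi
  | case2 j => exact hrow j hj
  | case3 i j ih₁ ih₂ => rw [hrec i j hi hj, ih₁ (by omega) hj, ih₂ hi (by omega)]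

section SkewForm

variable {R : Type*} [CommRing R]

def shiftRight (u : ℕ → R) : ℕ → R
  | 0 => 0
  | k + 1 => u k

theorem sum_mul_boole_succ_eq_shiftRight (u : ℕ → R) {m l : ℕ} (hl : l < m) :
    ∑ k ∈ range m, u k * (if l = k + 1 then 1 else 0) = shiftRight u l := by
  cases l with
  | zero => simp [shiftRight]
  | succ l => simp [shiftRight, show l < m by omega]

def skewForm (N : ℕ) (u v : ℕ → R) : R := ∑ l ∈ range N, (u (l + 1) * v l - u l * v (l + 1))

variable (N : ℕ) (u u' v v' : ℕ → R)

theorem skewForm_comm : skewForm N u v = -skewForm N v u := by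
  rw [skewForm, skewForm, ← sum_neg_distrib]
  exact sum_congr rfl fun _ _ => by ring

theorem skewForm_self : skewForm N u u = 0 := by
  simp only [skewForm, mul_comm, sub_self, sum_const_zero]

theorem skewForm_add_left : skewForm N (u + u') v = skewForm N u v + skewForm N u' v := by
  simp only [skewForm, Pi.add_apply, ← sum_add_distrib]
  exact sum_congr rfl fun _ _ => by ring

theorem skewForm_add_right : skewForm N u (v + v') = skewForm N u v + skewForm N u v' := by
  simp only [skewForm, Pi.add_apply, ← sum_add_distrib]
  exact sum_congr rfl fun _ _ => by ring

theorem skewForm_succ :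
    skewForm (N + 1) u v = skewForm N u v + (u (N + 1) * v N - u N * v (N + 1)) :=
  sum_range_succ _ _

theorem skewForm_shiftRight :
    skewForm (N + 1) (shiftRight u) (shiftRight v) = skewForm N u v := by
  simp [skewForm, sum_range_succ', shiftRight]

theorem skewForm_shiftRight_single :
    skewForm (N + 1) (shiftRight u) (Pi.single 0 1) = u 0 := by
  simp [skewForm, sum_range_succ', shiftRight]

end SkewForm

theorem Ring.choose_add_one_eq_add_shiftRight {R : Type*} [CommRing R] [BinomialRing R] (r : R) :
    Ring.choose (r + 1) = Ring.choose r + shiftRight (Ring.choose r) := by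
  funext k
  cases k with
  | zero => simp [shiftRight]
  | succ k => rw [Ring.choose_succ_succ, Pi.add_apply, shiftRight, add_comm]

/-- Row `i - 1` of Pascal's triangle, so that row `0` is `(1, -1, 1, -1, …)`. -/
def pascalRow (i : ℕ) : ℕ → ℤ := Ring.choose ((i : ℤ) - 1)

theorem pascalRow_succ (i : ℕ) : pascalRow (i + 1) = pascalRow i + shiftRight (pascalRow i) := by
  rw [pascalRow, pascalRow, ← Ring.choose_add_one_eq_add_shiftRight]
  congr 1
  push_cast
  ring

theorem pascalRow_succ_apply (i k : ℕ) : pascalRow (i + 1) k = i.choose k := by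
  rw [pascalRow, Nat.cast_succ, add_sub_cancel_right, Ring.choose_natCast]

theorem pascalRow_apply_zero (i : ℕ) : pascalRow i 0 = 1 :=
  Ring.choose_zero_right _

theorem pascalRow_one : pascalRow 1 = Pi.single 0 1 := by
  funext k
  cases k <;> simp [pascalRow_succ_apply]

theorem pascalRow_eq_zero {i k : ℕ} (hi : 0 < i) (hik : i ≤ k) : pascalRow i k = 0 := by
  obtain ⟨i, rfl⟩ := Nat.exists_eq_add_of_lt hi
  rw [zero_add, pascalRow_succ_apply, Nat.choose_eq_zero_of_lt (by omega), Nat.cast_zero]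

theorem skewForm_shiftRight_pascalRow {N i j : ℕ} (hi : i ≤ N) (hj : j ≤ N) :
    skewForm (N + 1) (shiftRight (pascalRow i)) (shiftRight (pascalRow j)) =
      skewForm (N + 1) (pascalRow i) (pascalRow j) := by
  rw [skewForm_shiftRight, skewForm_succ, left_eq_add]
  rcases Nat.eq_zero_or_pos i with rfl | hi₀
  · rcases Nat.eq_zero_or_pos j with rfl | hj₀
    · ring
    · simp [pascalRow_eq_zero hj₀ hj, pascalRow_eq_zero hj₀ (hj.trans N.le_succ)]
  · simp [pascalRow_eq_zero hi₀ hi, pascalRow_eq_zero hi₀ (hi.trans N.le_succ)]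

theorem skewForm_pascalRow_zero {m i : ℕ} (hi : i < m) :
    skewForm (m - 1) (pascalRow i) (pascalRow 0) = if i = 0 then 0 else 1 := by
  cases i with
  | zero => simp [skewForm_self]
  | succ i =>
    obtain ⟨N, hN⟩ : ∃ N, m - 1 = N + 1 := ⟨m - 2, by omega⟩
    -- `pascalRow 1 = pascalRow 0 + T (pascalRow 0)` is the unit vector at `0`,
    -- against which `skewForm (T u)` reads off `u 0`.
    have key := skewForm_shiftRight_single N (pascalRow i)
    rw [← pascalRow_one, pascalRow_succ, skewForm_add_right,
      skewForm_shiftRight_pascalRow (by omega) N.zero_le, pascalRow_apply_zero] at key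
    rw [if_neg i.succ_ne_zero, hN, pascalRow_succ, skewForm_add_left]
    linear_combination key

theorem pascalRec_eq_skewForm {m i j : ℕ} (hi : i < m) (hj : j < m) :
    pascalRec (fun k => if k = 0 then (0 : ℤ) else 1) (fun k => -(if k = 0 then (0 : ℤ) else 1))
      i j = skewForm (m - 1) (pascalRow i) (pascalRow j) := by
  refine (eq_pascalRec (f := fun i j => skewForm (m - 1) (pascalRow i) (pascalRow j))
    (fun i hi => skewForm_pascalRow_zero hi) (fun j hj => ?_) (fun i j hi hj => ?_) i j hi hj).symm
  · rw [skewForm_comm, skewForm_pascalRow_zero hj]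
  · obtain ⟨N, hN⟩ : ∃ N, m - 1 = N + 1 := ⟨m - 2, by omega⟩
    simp only [hN, pascalRow_succ, skewForm_add_left, skewForm_add_right]
    rw [skewForm_shiftRight_pascalRow (by omega) (by omega)]
    ring

def skewShift (k l : ℕ) : ℤ := (if k = l + 1 then 1 else 0) - (if l = k + 1 then 1 else 0)

theorem sum_sum_mul_skewShift_mul (m : ℕ) (u v : ℕ → ℤ) :
    ∑ l ∈ range m, (∑ k ∈ range m, u k * skewShift k l) * v l = skewForm (m - 1) u v := by
  have inner : ∀ l ∈ range m, ∑ k ∈ range m, u k * skewShift k l =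
      (if l + 1 < m then u (l + 1) else 0) - shiftRight u l := fun l hl => by
    simp only [skewShift, mul_sub, sum_sub_distrib,
      sum_mul_boole_succ_eq_shiftRight u (mem_range.1 hl)]
    simp
  rw [sum_congr rfl fun l hl => by rw [inner l hl], skewForm]
  cases m with
  | zero => simp
  | succ M =>
    simp only [sub_mul, sum_sub_distrib, add_tsub_cancel_right]
    rw [sum_range_succ, sum_range_succ']
    simp only [lt_irrefl, if_false, zero_mul, add_zero, shiftRight, add_lt_add_iff_right]
    rw [sum_congr rfl fun l hl => by rw [if_pos (mem_range.1 hl)]]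

theorem corner_pascalRec_eq (m : ℕ) :
    corner m (pascalRec (fun k => if k = 0 then (0 : ℤ) else 1)
      (fun k => -(if k = 0 then (0 : ℤ) else 1))) =
      corner m pascalRow * corner m skewShift * (corner m pascalRow)ᵀ := by
  rw [corner_transpose, corner_mul, corner_mul]
  refine corner_congr fun i j hi hj => ?_
  rw [pascalRec_eq_skewForm hi hj, sum_sum_mul_skewShift_mul]

def pascalStep (k l : ℕ) : ℤ := (if l = k then 1 else 0) + if l = k + 1 then 1 else 0

theorem corner_pascalRow_mul_pascalStep (m : ℕ) :
    corner m pascalRow * corner m pascalStep = corner m fun i l => (i.choose l : ℤ) := by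
  rw [corner_mul]
  refine corner_congr fun i l _ hl => ?_
  simp only [pascalStep, mul_add, sum_add_distrib, sum_mul_boole_succ_eq_shiftRight _ hl,
    sum_mul_boole, mem_range, if_pos hl]
  rw [← Pi.add_apply, ← pascalRow_succ, pascalRow_succ_apply]

theorem det_corner_pascalRow (m : ℕ) : (corner m pascalRow).det = 1 := by
  have hstep : (corner m pascalStep).det = 1 := by
    rw [← det_transpose, corner_transpose]
    exact det_corner_of_unitriangular (fun i j hij => by simp [pascalStep]; omega) fun i => by
      simp [pascalStep]
  have hchoose : (corner m fun i l => (i.choose l : ℤ)).det = 1 :=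
    det_corner_of_unitriangular (fun i j hij => by simp [Nat.choose_eq_zero_of_lt hij])
      fun i => by simp
  simpa [hstep, hchoose] using congrArg det (corner_pascalRow_mul_pascalStep m)

def pairedSymplectic (k l : ℕ) : ℤ :=
  (if k = l + 1 ∧ Even l then 1 else 0) - (if l = k + 1 ∧ Even k then 1 else 0)

def pairedShear (i k : ℕ) : ℤ := (if i = k then 1 else 0) - (if i = k + 2 ∧ Even k then 1 else 0)

theorem sum_pairedShear_mul (g : ℕ → ℤ) {m i : ℕ} (hi : i < m) :
    ∑ k ∈ range m, pairedShear i k * g k = g i - if 2 ≤ i ∧ Even i then g (i - 2) else 0 := by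
  have : ∀ k, pairedShear i k * g k = (if i = k then g k else 0) -
      if i - 2 = k then (if 2 ≤ i ∧ Even i then g k else 0) else 0 := fun k => by
    simp only [pairedShear, Nat.even_iff]
    split_ifs <;> omega
  simp only [this, sum_sub_distrib, sum_ite_eq, mem_range, if_pos hi,
    if_pos (show i - 2 < m by omega)]

theorem corner_skewShift_eq (m : ℕ) :
    corner m skewShift =
      corner m pairedShear * corner m pairedSymplectic * (corner m pairedShear)ᵀ := by
  rw [corner_transpose, corner_mul, corner_mul]
  refine corner_congr fun i j hi hj => ?_
  have hrow : ∀ l, ∑ k ∈ range m, pairedShear i k * pairedSymplectic k l =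
      (if i = l + 1 then 1 else 0) - if l = i + 1 ∧ Even i then 1 else 0 := fun l => by
    rw [sum_pairedShear_mul _ hi]
    simp only [pairedSymplectic, Nat.even_iff]
    split_ifs <;> omega
  simp only [hrow, mul_comm _ (pairedShear j _), sum_pairedShear_mul _ hj]
  simp only [skewShift, Nat.even_iff]
  split_ifs <;> omega

theorem det_corner_pairedSymplectic (n : ℕ) : (corner (2 * n) pairedSymplectic).det = 1 := by
  let e : Fin 2 × Fin n ≃ Fin (2 * n) :=
    (Equiv.prodComm _ _).trans (finProdFinEquiv.trans (finCongr (Nat.mul_comm n 2)))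
  have he : ∀ p, (e p : ℕ) = p.1 + 2 * p.2 := fun p => by
    simp [e, finProdFinEquiv, Equiv.prodComm, finCongr]
  have hJ : corner (2 * n) pairedSymplectic =
      reindex e e (blockDiagonal fun _ => !![0, -1; 1, 0]) := by
    ext i j
    obtain ⟨⟨s, r⟩, rfl⟩ := e.surjective i
    obtain ⟨⟨t, r'⟩, rfl⟩ := e.surjective j
    simp only [reindex_apply, submatrix_apply, Equiv.symm_apply_apply, blockDiagonal_apply]
    simp only [corner, of_apply, he, pairedSymplectic, Nat.even_iff]
    fin_cases s <;> fin_cases t <;> simp <;> omega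
  rw [hJ, det_reindex_self, det_blockDiagonal]
  simp

theorem det_corner_skewShift (n : ℕ) : (corner (2 * n) skewShift).det = 1 := by
  have hL : (corner (2 * n) pairedShear).det = 1 :=
    det_corner_of_unitriangular (fun i j hij => by simp [pairedShear]; omega) fun i => by
      simp [pairedShear]
  rw [corner_skewShift_eq, det_mul, det_mul, det_transpose, hL, det_corner_pairedSymplectic]
  ring

theorem stmt_12 (n : ℕ) :
    (Matrix.of fun i j : Fin (2 * n) =>
      pascalRec (fun k => if k = 0 then (0 : ℤ) else 1)
        (fun k => -(if k = 0 then (0 : ℤ) else 1)) i j).det = 1 := by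
  rw [← corner, corner_pascalRec_eq, det_mul, det_mul, det_transpose, det_corner_pascalRow,
    det_corner_skewShift]
  ring
end

section
/- The symplectic generalized Pascal matrices P_{α,−α}(2n) associated to the sequence α = (0,1,2,3,4,5,…) (i.e., α_k = k) have determinant 1 for every natural integer n. -/
section

variable {R : Type*} [CommRing R] {α β : ℕ → R}

@[simp]
theorem pascalRec_zero_right (i : ℕ) : pascalRec α β i 0 = α i := by
  cases i <;> simp [pascalRec]

@[simp]
theorem pascalRec_zero_left (h : α 0 = β 0) (j : ℕ) : pascalRec α β 0 j = β j := by
  cases j <;> simp [pascalRec, h]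

@[simp]
theorem pascalRec_succ_succ (i j : ℕ) :
    pascalRec α β (i + 1) (j + 1) = pascalRec α β i (j + 1) + pascalRec α β (i + 1) j := by
  simp [pascalRec]

end

namespace SymplecticPascal

open Matrix Finset

def entry : ℕ → ℕ → ℤ := pascalRec (fun k => (k : ℤ)) (fun k => -(k : ℤ))

def matrix (m : ℕ) : Matrix (Fin m) (Fin m) ℤ := of fun i j => entry i j

@[simp] theorem entry_zero_right (i : ℕ) : entry i 0 = i := pascalRec_zero_right i

@[simp] theorem entry_zero_left (j : ℕ) : entry 0 j = -j := pascalRec_zero_left (by simp) j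

@[simp] theorem entry_succ_succ (i j : ℕ) :
    entry (i + 1) (j + 1) = entry i (j + 1) + entry (i + 1) j := pascalRec_succ_succ i j

section Reduction

variable {R : Type*} [CommRing R]

def reduceAt : ℕ → (ℕ → R) → R
  | 0, f => f 0
  | 1, f => f 1 - f 0
  | v + 2, f => f (v + 2) - 2 * f (v + 1) + f v + f 0

def reduceCoeff (i k : ℕ) : R := reduceAt i fun u => if u = k then 1 else 0

theorem sum_reduceCoeff_mul {N i : ℕ} (hi : i < N) (f : ℕ → R) :
    ∑ k : Fin N, reduceCoeff i k * f k = reduceAt i f := by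
  rw [Fin.sum_univ_eq_sum_range (fun k => reduceCoeff i k * f k)]
  rcases i with _ | _ | v <;>
    simp (disch := omega) [reduceCoeff, reduceAt, sub_mul, add_mul, sum_add_distrib,
      sum_sub_distrib, if_pos]

theorem reduceCoeff_of_lt {i k : ℕ} (h : i < k) : (reduceCoeff i k : R) = 0 := by
  rcases i with _ | _ | v <;> simp (disch := omega) [reduceCoeff, reduceAt, if_neg]

@[simp] theorem reduceCoeff_self (i : ℕ) : (reduceCoeff i i : R) = 1 := by
  rcases i with _ | _ | v <;> simp (disch := omega) [reduceCoeff, reduceAt, if_neg]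

variable (R) in
def reduceMatrix (N : ℕ) : Matrix (Fin N) (Fin N) R := of fun i k => reduceCoeff i k

theorem det_reduceMatrix (N : ℕ) : (reduceMatrix R N).det = 1 := by
  rw [det_of_isLowerTriangular (reduceMatrix R N) fun i j (h : i < j) => reduceCoeff_of_lt h]
  simp [reduceMatrix]

theorem reduceMatrix_mul_mul_transpose_apply {N : ℕ} (P : ℕ → ℕ → R) (i j : Fin N) :
    (reduceMatrix R N * of (fun u v : Fin N => P u v) * (reduceMatrix R N)ᵀ) i j =
      reduceAt j fun v => reduceAt i fun u => P u v := by
  have reduce_rows (l : Fin N) :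
      ∑ k : Fin N, reduceCoeff i k * P k l = reduceAt i fun u => P u l :=
    sum_reduceCoeff_mul i.isLt fun u => P u l
  simp only [mul_apply, of_apply, transpose_apply, reduceMatrix, reduce_rows,
    mul_comm _ (reduceCoeff j _)]
  exact sum_reduceCoeff_mul j.isLt fun v => reduceAt i fun u => P u v

end Reduction

def reduced (i j : ℕ) : ℤ := reduceAt j fun v => reduceAt i fun u => entry u v

theorem reduced_add_two_add_two (a b : ℕ) : reduced (a + 2) (b + 2) = entry a b := by
  simp only [reduced, reduceAt, entry_succ_succ, entry_zero_left, entry_zero_right]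
  push_cast
  ring

theorem reduced_eq_zero_of_lt_two_left {i : ℕ} (hi : i < 2) (b : ℕ) :
    reduced i (b + 2) = 0 := by
  interval_cases i <;>
    simp only [reduced, reduceAt, entry_succ_succ, entry_zero_left, entry_zero_right] <;>
    push_cast <;> ring

theorem reduced_eq_zero_of_lt_two_right {j : ℕ} (hj : j < 2) (a : ℕ) :
    reduced (a + 2) j = 0 := by
  interval_cases j <;>
    simp only [reduced, reduceAt, entry_succ_succ, entry_zero_left, entry_zero_right] <;>
    push_cast <;> ring

theorem reduced_fin_two (i j : Fin 2) : reduced i j = !![0, -1; 1, 0] i j := by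
  fin_cases i <;> fin_cases j <;> simp [reduced, reduceAt]

theorem reduceMatrix_conj_matrix (m : ℕ) :
    reduceMatrix ℤ (2 + m) * matrix (2 + m) * (reduceMatrix ℤ (2 + m))ᵀ =
      (fromBlocks !![0, -1; 1, 0] 0 0 (matrix m)).submatrix finSumFinEquiv.symm
        finSumFinEquiv.symm := by
  ext i j
  rw [matrix, reduceMatrix_mul_mul_transpose_apply, submatrix_apply]
  change reduced i j = _
  induction i using Fin.addCases <;> induction j using Fin.addCases
  case left.left a b => simpa using reduced_fin_two a b
  case left.right a b =>
    simpa [add_comm 2] using reduced_eq_zero_of_lt_two_left a.isLt b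
  case right.left a b =>
    simpa [add_comm 2] using reduced_eq_zero_of_lt_two_right b.isLt a
  case right.right a b =>
    simpa [matrix, add_comm 2] using reduced_add_two_add_two a b

theorem det_matrix_two_add (m : ℕ) : (matrix (2 + m)).det = (matrix m).det := by
  have h := congrArg det (reduceMatrix_conj_matrix m)
  rw [det_mul, det_mul, det_transpose, det_reduceMatrix, det_submatrix_equiv_self,
    det_fromBlocks_zero₂₁, det_fin_two_of] at h
  simpa using h

theorem det_matrix_two_mul (n : ℕ) : (matrix (2 * n)).det = 1 := by
  induction n with
  | zero => simp
  | succ n ih => rw [mul_add_one, add_comm, det_matrix_two_add, ih]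

end SymplecticPascal

theorem stmt_13 (n : ℕ) :
    (Matrix.of fun i j : Fin (2 * n) =>
      pascalRec (fun k => (k : ℤ)) (fun k => -(k : ℤ)) i j).det = 1 :=
  SymplecticPascal.det_matrix_two_mul n
end
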